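/- The function σ_s is a normalized 2-cocycle on ℤ_n with values in the nonzero complex numbers; that is, σ_s takes nonzero values, σ_s(y,z)·σ_s(x,yz) = σ_s(x,y)·σ_s(xy,z) for all x, y, z ∈ ℤ_n, and σ_s(g^0, x) = 1 = σ_s(x, g^0) for all x ∈ ℤ_n. -/

import Mathlib

/-! With the carry `c(a, b) = (a' + b') / n ∈ {0, 1}` one has `Φ_s(x, y, z) = 𝕢^(s x' c(y, z))`.
In `σ_s(x, y)` the factors with exponent divisible by `x'` cancel by the cocycle identity for `c`,
and since `(xyg)' ≡ (xy)' + 1 (mod n)` what remains is `σ_s(x, y) = 𝕢^(-s c(x⁻¹, y⁻¹))`.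
The carry is a 2-cocycle because `n c(a, b) = a' + b' - (ab)'` is a coboundary over `ℤ`;
hence so is `σ_s`, and it is normalized because adding `0` never carries. -/

/-- The 3-cocycle `Φ_s` on the cyclic group `ℤ_n` (written additively via `ZMod n`,
where `g^i` corresponds to `(i : ZMod n)`), defined by
`Φ_s(g^i, g^j, g^k) = 𝕢^{s i (j+k-(j+k)')/n}` for `0 ≤ i,j,k ≤ n-1`,
where `i'` is the remainder of `i` modulo `n`. -/
noncomputable def PhiCocycle (n s : ℕ) (q : ℂ) (x y z : ZMod n) : ℂ :=
  q ^ (s * x.val * ((y.val + z.val - (y.val + z.val) % n) / n))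

/-- The 2-cocycle `σ_s` on `ℤ_n` defined from `Φ_s` by
`σ_s(x,y) = Φ_s(x,y,g)·Φ_s(xy,y⁻¹,x⁻¹)·Φ_s(x,yg,y⁻¹) / (Φ_s(xyg,y⁻¹,x⁻¹)·Φ_s(x,y,y⁻¹))`,
where the generator `g` corresponds to `(1 : ZMod n)`. -/
noncomputable def SigmaCocycle (n s : ℕ) (q : ℂ) (x y : ZMod n) : ℂ :=
  PhiCocycle n s q x y 1 * PhiCocycle n s q (x + y) (-y) (-x) *
      PhiCocycle n s q x (y + 1) (-y) /
    (PhiCocycle n s q (x + y + 1) (-y) (-x) * PhiCocycle n s q x y (-y))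

namespace ZMod

variable {n : ℕ}

def carry (a b : ZMod n) : ℕ := (a.val + b.val) / n

theorem carry_comm (a b : ZMod n) : carry a b = carry b a := by
  rw [carry, carry, Nat.add_comm]

variable [NeZero n]

@[simp]
theorem carry_zero_left (a : ZMod n) : carry 0 a = 0 := by
  rw [carry, val_zero, Nat.zero_add, Nat.div_eq_of_lt a.val_lt]

@[simp]
theorem carry_zero_right (a : ZMod n) : carry a 0 = 0 := by
  rw [carry_comm, carry_zero_left]

theorem val_add_add_mul_carry (a b : ZMod n) : (a + b).val + n * carry a b = a.val + b.val := by
  rw [val_add, carry, Nat.mod_add_div]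

theorem carry_add_carry (a b c : ZMod n) :
    carry b c + carry a (b + c) = carry a b + carry (a + b) c := by
  have hn : 0 < n := Nat.pos_of_neZero n
  have hbc := val_add_add_mul_carry b c
  have habc := val_add_add_mul_carry a (b + c)
  have hab := val_add_add_mul_carry a b
  have habc' := val_add_add_mul_carry (a + b) c
  rw [← add_assoc] at habc
  refine Nat.eq_of_mul_eq_mul_left hn ?_
  rw [Nat.mul_add, Nat.mul_add]
  omega

end ZMod

open ZMod

theorem phiCocycle_eq_pow_carry (n s : ℕ) (q : ℂ) (x y z : ZMod n) :
    PhiCocycle n s q x y z = q ^ (s * x.val * carry y z) := by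
  rw [PhiCocycle, ← Nat.div_eq_sub_mod_div, carry]

theorem sigmaCocycle_eq_inv_pow_carry {n : ℕ} [Fact (1 < n)] (s : ℕ) {q : ℂ} (hq0 : q ≠ 0)
    (hq : q ^ n = 1) (x y : ZMod n) :
    SigmaCocycle n s q x y = (q ^ (s * carry (-x) (-y)))⁻¹ := by
  have hcarry : carry y 1 + carry (y + 1) (-y) = carry y (-y) := by
    have := carry_add_carry 1 y (-y)
    rwa [add_neg_cancel, carry_zero_right, add_zero, carry_comm 1 y, add_comm 1 y, eq_comm] at this
  have hval : q ^ (x + y + 1).val = q ^ ((x + y).val + 1) := by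
    rw [← val_one n, ← val_add_add_mul_carry, pow_add, pow_mul, hq, one_pow, mul_one]
  have hnum : q ^ (s * x.val * carry y 1) * q ^ (s * x.val * carry (y + 1) (-y)) =
      q ^ (s * x.val * carry y (-y)) := by
    rw [← pow_add, ← Nat.mul_add, hcarry]
  have hden : q ^ (s * (x + y + 1).val * carry (-x) (-y)) =
      q ^ (s * (x + y).val * carry (-x) (-y)) * q ^ (s * carry (-x) (-y)) := by
    calc q ^ (s * (x + y + 1).val * carry (-x) (-y))
        = (q ^ (x + y + 1).val) ^ (s * carry (-x) (-y)) := by rw [← pow_mul]; ring_nf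
      _ = (q ^ ((x + y).val + 1)) ^ (s * carry (-x) (-y)) := by rw [hval]
      _ = _ := by rw [← pow_mul, ← pow_add]; ring_nf
  simp only [SigmaCocycle, phiCocycle_eq_pow_carry, carry_comm (-y) (-x)]
  rw [hden, ← hnum]
  field_simp

theorem sigmaCocycle_is_normalized_two_cocycle_general
    (n : ℕ) (hn : 2 ≤ n) (q : ℂ) (hq : IsPrimitiveRoot q n) (s : ℕ) :
    (∀ x y : ZMod n, SigmaCocycle n s q x y ≠ 0) ∧
    (∀ x y z : ZMod n,
      SigmaCocycle n s q y z * SigmaCocycle n s q x (y + z) =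
        SigmaCocycle n s q x y * SigmaCocycle n s q (x + y) z) ∧
    (∀ x : ZMod n, SigmaCocycle n s q 0 x = 1 ∧ SigmaCocycle n s q x 0 = 1) := by
  have : Fact (1 < n) := ⟨hn⟩
  have hq0 : q ≠ 0 := hq.ne_zero (by omega)
  simp only [sigmaCocycle_eq_inv_pow_carry s hq0 hq.pow_eq_one]
  refine ⟨fun x y => inv_ne_zero (pow_ne_zero _ hq0), fun x y z => ?_, fun x => by simp⟩
  rw [← mul_inv, ← mul_inv, ← pow_add, ← pow_add, ← Nat.mul_add, ← Nat.mul_add, neg_add,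
    carry_add_carry, neg_add]

/-- `σ_s` is a normalized 2-cocycle on `ℤ_n` with values in `ℂ∖{0}`. -/
theorem sigmaCocycle_is_normalized_two_cocycle
    (n : ℕ) (hn : 2 ≤ n) (q : ℂ) (hq : IsPrimitiveRoot q n)
    (s : ℕ) (hs : s ≤ n - 1) :
    (∀ x y : ZMod n, SigmaCocycle n s q x y ≠ 0) ∧
    (∀ x y z : ZMod n,
      SigmaCocycle n s q y z * SigmaCocycle n s q x (y + z) =
        SigmaCocycle n s q x y * SigmaCocycle n s q (x + y) z) ∧
    (∀ x : ZMod n, SigmaCocycle n s q 0 x = 1 ∧ SigmaCocycle n s q x 0 = 1) :=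
  sigmaCocycle_is_normalized_two_cocycle_general n hn q hq s
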